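/- Let T, S be triangulated categories with t-structures, let F : T → S be a triangulated functor admitting a right adjoint G, and suppose there exists N ≥ 0 such that for every object L of T with H^j(L) = 0 for all j ≥ c, one has H^i(F L) = 0 for all i ≥ c + N. Then for every bounded-below object E of S (i.e. H^i(E) = 0 for i ≪ 0), the object G E is bounded below: there exists B such that H^i(G E) = 0 for all i ≤ c − B whenever H^i(E) = 0 for i < c. -/

import Mathlib

open CategoryTheory Limits Pretriangulated

namespace CategoryTheory.Adjunction

variable {C D : Type*} [Category C] [Category D]
  [Preadditive C] [Preadditive D] [HasZeroObject C] [HasZeroObject D]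
  [HasShift C ℤ] [HasShift D ℤ]
  [∀ n : ℤ, (shiftFunctor C n).Additive] [∀ n : ℤ, (shiftFunctor D n).Additive]
  [Pretriangulated C] [Pretriangulated D]

lemma isGE_rightAdjoint_obj (tC : Triangulated.TStructure C) (tD : Triangulated.TStructure D)
    {F : C ⥤ D} {G : D ⥤ C} (adj : F ⊣ G) {a b : ℤ}
    (hF : ∀ X : C, tC.IsLE X a → tD.IsLE (F.obj X) b) (Y : D) (hY : tD.IsGE Y (b + 1)) :
    tC.IsGE (G.obj Y) (a + 1) := by
  have := adj.isRightAdjoint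
  rw [tC.isGE_iff_orthogonal a (a + 1) rfl]
  intro X f hX
  have hf : (adj.homEquiv X Y).symm f = 0 :=
    tD.zero_of_isLE_of_isGE _ b (b + 1) (by omega) (hF X hX) hY
  rw [← (adj.homEquiv X Y).apply_symm_apply f, hf, homEquiv_unit, G.map_zero, comp_zero]

end CategoryTheory.Adjunction

/-- Let `T`, `S` be triangulated categories with t-structures `tT`, `tS`, and let
`F : T ⥤ S` be a triangulated functor with right adjoint `G`.  Suppose `F` has
cohomological dimension `≤ N`: for every `c` and every `L` with `H^j(L) = 0` for `j ≥ c`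
(i.e. `L ∈ T^{≤ c-1}`), one has `H^i(F L) = 0` for `i ≥ c + N` (i.e. `F L ∈ S^{≤ c+N-1}`).
Then `G` sends bounded-below objects to bounded-below objects: there is a `B` such that
whenever `H^i(E) = 0` for `i < c` (i.e. `E ∈ S^{≥ c}`), one has `H^i(G E) = 0` for all
`i ≤ c - B` (i.e. `G E ∈ T^{≥ c - B + 1}`). -/
theorem rightAdjoint_preserves_boundedBelow
    {T S : Type*} [Category T] [Category S]
    [Preadditive T] [Preadditive S] [HasZeroObject T] [HasZeroObject S]
    [HasShift T ℤ] [HasShift S ℤ]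
    [∀ n : ℤ, (shiftFunctor T n).Additive] [∀ n : ℤ, (shiftFunctor S n).Additive]
    [Pretriangulated T] [Pretriangulated S]
    (tT : Triangulated.TStructure T) (tS : Triangulated.TStructure S)
    (F : T ⥤ S) [F.CommShift ℤ] [F.IsTriangulated]
    (G : S ⥤ T) (adj : F ⊣ G)
    (N : ℕ)
    (hF : ∀ (c : ℤ) (L : T), tT.IsLE L (c - 1) → tS.IsLE (F.obj L) (c + N - 1)) :
    ∃ B : ℤ, ∀ (c : ℤ) (E : S), tS.IsGE E c → tT.IsGE (G.obj E) (c - B + 1) := by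
  refine ⟨N + 1, fun c E hE => ?_⟩
  have hFc : ∀ L : T, tT.IsLE L (c - N - 1) → tS.IsLE (F.obj L) (c - 1) := fun L hL => by
    simpa using hF (c - N) L hL
  have hGE := adj.isGE_rightAdjoint_obj tT tS hFc E (by simpa using hE)
  rwa [show c - (N + 1) + 1 = c - N - 1 + 1 by ring]
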